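/- arXiv:1307.7792 — 6 statements merged into one kernel-verified Lean document; each statement's English description precedes it below -/
import Mathlib

section
/- For every finite set P of points in the Euclidean plane, every weight function w : P → ℝ with w(p) ≥ 0 for all p, and every integer k ≥ 1, there exist residues r, s ∈ {0,…,k−1} such that the maximum total weight of a conflict-free subset of the points of P that survive the (r,s)-shifting is at least (1 − 1/k)² times the maximum total weight of a conflict-free subset of P. -/
/-!
Fix a maximum-weight conflict-free set `T₀ ⊆ P`. A real number lies within distance `1/2` of at
most one integer, so each point is killed by at most one of the `k` vertical residues `r`;
averaging over `r` therefore keeps at least a `(1 - 1/k)` fraction of the weight of `T₀` for some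
`r`. Averaging once more over the horizontal residues `s` keeps a `(1 - 1/k)²` fraction, and the
surviving part of `T₀` is still conflict-free.
-/

open scoped Classical

noncomputable section

/-- A set of bidder locations is conflict-free if all pairwise Euclidean
distances are at least 1. -/
def ConflictFree (S : Finset (EuclideanSpace ℝ (Fin 2))) : Prop :=
  ∀ p ∈ S, ∀ q ∈ S, p ≠ q → 1 ≤ dist p q

/-- A point survives the `(r,s)`-shifting with grid parameter `k` if its
radius-1/2 disk avoids all vertical lines `X ≡ r (mod k)` and all horizontal
lines `Y ≡ s (mod k)`. -/
def Survives (k r s : ℕ) (p : EuclideanSpace ℝ (Fin 2)) : Prop :=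
  (∀ c : ℤ, c % (k : ℤ) = (r : ℤ) → (1 / 2 : ℝ) ≤ |p 0 - (c : ℝ)|) ∧
  (∀ c : ℤ, c % (k : ℤ) = (s : ℤ) → (1 / 2 : ℝ) ≤ |p 1 - (c : ℝ)|)

open Finset

def AvoidsLines (k r : ℕ) (x : ℝ) : Prop :=
  ∀ c : ℤ, c % (k : ℤ) = (r : ℤ) → (1 / 2 : ℝ) ≤ |x - (c : ℝ)|

lemma survives_iff (k r s : ℕ) (p : EuclideanSpace ℝ (Fin 2)) :
    Survives k r s p ↔ AvoidsLines k r (p 0) ∧ AvoidsLines k s (p 1) :=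
  Iff.rfl

lemma Int.eq_of_abs_sub_lt_half {x : ℝ} {c₁ c₂ : ℤ} (h₁ : |x - c₁| < 1 / 2)
    (h₂ : |x - c₂| < 1 / 2) : c₁ = c₂ := by
  have hreal : |((c₁ - c₂ : ℤ) : ℝ)| < 1 := by
    push_cast
    rw [abs_lt] at h₁ h₂ ⊢
    constructor <;> linarith
  have hint : |c₁ - c₂| < 1 := by exact_mod_cast hreal
  exact sub_eq_zero.mp (Int.abs_lt_one_iff.mp hint)

lemma card_filter_not_avoidsLines_le_one (k : ℕ) (x : ℝ) :
    ((range k).filter fun r => ¬ AvoidsLines k r x).card ≤ 1 := by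
  rw [card_le_one]
  intro r₁ hr₁ r₂ hr₂
  simp only [mem_filter, AvoidsLines, not_forall, not_le] at hr₁ hr₂
  obtain ⟨-, c₁, hc₁, hx₁⟩ := hr₁
  obtain ⟨-, c₂, hc₂, hx₂⟩ := hr₂
  obtain rfl := Int.eq_of_abs_sub_lt_half hx₁ hx₂
  omega

lemma exists_sum_filter_ge {α : Type*} {k : ℕ} (hk : 1 ≤ k) (T : Finset α) (w : α → ℝ)
    (hw : ∀ p ∈ T, 0 ≤ w p) (Q : ℕ → α → Prop)
    (hQ : ∀ p ∈ T, ((range k).filter fun r => ¬ Q r p).card ≤ 1) :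
    ∃ r < k, (1 - 1 / (k : ℝ)) * ∑ p ∈ T, w p ≤ ∑ p ∈ T.filter (Q r), w p := by
  have hcount : ∀ p ∈ T, (k : ℝ) - 1 ≤ ((range k).filter fun r => Q r p).card := by
    intro p hp
    have hsplit := card_filter_add_card_filter_not (s := range k) (fun r => Q r p)
    rw [card_range] at hsplit
    have := hQ p hp
    rw [sub_le_iff_le_add]
    exact_mod_cast (by omega : k ≤ ((range k).filter fun r => Q r p).card + 1)
  have htotal : ∑ _r ∈ range k, (1 - 1 / (k : ℝ)) * ∑ p ∈ T, w p ≤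
      ∑ r ∈ range k, ∑ p ∈ T.filter (Q r), w p := by
    calc ∑ _r ∈ range k, (1 - 1 / (k : ℝ)) * ∑ p ∈ T, w p
        = ∑ p ∈ T, ((k : ℝ) - 1) * w p := by
          rw [sum_const, card_range, nsmul_eq_mul, ← mul_sum]
          field_simp
      _ ≤ ∑ p ∈ T, (((range k).filter fun r => Q r p).card : ℝ) * w p :=
          sum_le_sum fun p hp => mul_le_mul_of_nonneg_right (hcount p hp) (hw p hp)
      _ = ∑ r ∈ range k, ∑ p ∈ T.filter (Q r), w p := by
          simp_rw [sum_filter]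
          rw [sum_comm]
          refine sum_congr rfl fun p _ => ?_
          rw [← sum_filter, sum_const, nsmul_eq_mul]
  obtain ⟨r, hr, hle⟩ := exists_le_of_sum_le (nonempty_range_iff.mpr (by omega)) htotal
  exact ⟨r, mem_range.mp hr, hle⟩

lemma exists_avoidsLines_sum_ge {α : Type*} {k : ℕ} (hk : 1 ≤ k) (T : Finset α) (w : α → ℝ)
    (hw : ∀ p ∈ T, 0 ≤ w p) (f : α → ℝ) :
    ∃ r < k, (1 - 1 / (k : ℝ)) * ∑ p ∈ T, w p ≤
      ∑ p ∈ T.filter (fun p => AvoidsLines k r (f p)), w p :=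
  exists_sum_filter_ge hk T w hw _ fun p _ => card_filter_not_avoidsLines_le_one k (f p)

lemma ConflictFree.mono {S T : Finset (EuclideanSpace ℝ (Fin 2))} (hT : ConflictFree T)
    (hST : S ⊆ T) : ConflictFree S :=
  fun p hp q hq hpq => hT p (hST hp) q (hST hq) hpq

lemma exists_conflictFree_isMax (P : Finset (EuclideanSpace ℝ (Fin 2)))
    (w : EuclideanSpace ℝ (Fin 2) → ℝ) :
    ∃ T₀ ⊆ P, ConflictFree T₀ ∧
      ∀ T ⊆ P, ConflictFree T → ∑ p ∈ T, w p ≤ ∑ p ∈ T₀, w p := by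
  have hempty : ∅ ∈ P.powerset.filter ConflictFree := by
    simp [ConflictFree]
  obtain ⟨T₀, hT₀, hmax⟩ := exists_max_image _ (fun T => ∑ p ∈ T, w p) ⟨_, hempty⟩
  rw [mem_filter, mem_powerset] at hT₀
  exact ⟨T₀, hT₀.1, hT₀.2, fun T hTP hT => hmax T (mem_filter.mpr ⟨mem_powerset.mpr hTP, hT⟩)⟩

/-- For some residues `r, s ∈ {0,…,k−1}`, the maximum total weight of a
conflict-free subset of the surviving points of `P` is at least
`(1 − 1/k)²` times the maximum total weight of a conflict-free subset of `P`. -/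
theorem shifting_strategy_bound (P : Finset (EuclideanSpace ℝ (Fin 2)))
    (w : EuclideanSpace ℝ (Fin 2) → ℝ) (hw : ∀ p ∈ P, 0 ≤ w p)
    (k : ℕ) (hk : 1 ≤ k) :
    ∃ r < k, ∃ s < k, ∃ S ⊆ P,
      (∀ p ∈ S, Survives k r s p) ∧ ConflictFree S ∧
      ∀ T ⊆ P, ConflictFree T →
        (1 - 1 / (k : ℝ)) ^ 2 * ∑ p ∈ T, w p ≤ ∑ p ∈ S, w p := by
  obtain ⟨T₀, hT₀P, hT₀, hmax⟩ := exists_conflictFree_isMax P w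
  obtain ⟨r, hr, hA⟩ := exists_avoidsLines_sum_ge hk T₀ w (fun p hp => hw p (hT₀P hp)) (· 0)
  set A := T₀.filter fun p => AvoidsLines k r (p 0)
  have hAT₀ : A ⊆ T₀ := filter_subset _ _
  obtain ⟨s, hs, hS⟩ := exists_avoidsLines_sum_ge hk A w
    (fun p hp => hw p (hT₀P (hAT₀ hp))) (· 1)
  set S := A.filter fun p => AvoidsLines k s (p 1)
  have hSA : S ⊆ A := filter_subset _ _
  have hfac : 0 ≤ 1 - 1 / (k : ℝ) := by
    rw [sub_nonneg, div_le_one (by positivity)]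
    exact_mod_cast hk
  refine ⟨r, hr, s, hs, S, hSA.trans (hAT₀.trans hT₀P), fun p hp => ?_,
    hT₀.mono (hSA.trans hAT₀), fun T hTP hT => ?_⟩
  · exact (survives_iff k r s p).mpr ⟨(mem_filter.mp (hSA hp)).2, (mem_filter.mp hp).2⟩
  calc (1 - 1 / (k : ℝ)) ^ 2 * ∑ p ∈ T, w p
      ≤ (1 - 1 / (k : ℝ)) * ((1 - 1 / (k : ℝ)) * ∑ p ∈ T₀, w p) := by
        rw [← mul_assoc, ← sq]
        exact mul_le_mul_of_nonneg_left (hmax T hTP hT) (by positivity)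
    _ ≤ (1 - 1 / (k : ℝ)) * ∑ p ∈ A, w p := mul_le_mul_of_nonneg_left hA hfac
    _ ≤ ∑ p ∈ S, w p := hS
end
end

section
/- For every real ε > 0, let k = ⌈(1 + ε + √(1+ε))/ε⌉. Then for every finite set P of points in the Euclidean plane and every weight function w : P → ℝ with w(p) ≥ 0 for all p, there exist residues r, s ∈ {0,…,k−1} such that (1 + ε) times the maximum total weight of a conflict-free subset of the points of P surviving the (r,s)-shifting is at least the maximum total weight of a conflict-free subset of P; i.e., the shifting strategy yields a (1+ε)-approximation to the maximum-weight conflict-free set. -/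
open scoped Classical

noncomputable section

private lemma unique_center {x : ℝ} {c₁ c₂ : ℤ} (h₁ : |x - (c₁ : ℝ)| < 1 / 2)
    (h₂ : |x - (c₂ : ℝ)| < 1 / 2) : c₁ = c₂ := by
  have h : |(c₁ : ℝ) - (c₂ : ℝ)| < 1 := by
    have h3 := abs_sub_le ((c₁ : ℝ)) x ((c₂ : ℝ))
    have h4 : |(c₁ : ℝ) - x| = |x - (c₁ : ℝ)| := abs_sub_comm _ _
    rw [h4] at h3
    linarith
  have h' : |c₁ - c₂| < 1 := by
    have : (|c₁ - c₂| : ℝ) < 1 := by push_cast; exact h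
    exact_mod_cast this
  have := abs_lt.mp h'
  omega

private lemma avg_step {X : Type*} (k : ℕ) (hk : 0 < k) (T : Finset X)
    (w : X → ℝ) (hw : ∀ p ∈ T, 0 ≤ w p) (Q : ℕ → X → Prop)
    (huniq : ∀ p ∈ T, ∀ r₁ < k, ∀ r₂ < k, Q r₁ p → Q r₂ p → r₁ = r₂) :
    ∃ r < k, (k : ℝ) * ∑ p ∈ T.filter (fun p => Q r p), w p ≤ ∑ p ∈ T, w p := by
  set g : ℕ → ℝ := fun r => ∑ p ∈ T.filter (fun p => Q r p), w p with hg
  have hsum : ∑ r ∈ Finset.range k, g r ≤ ∑ p ∈ T, w p := by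
    calc ∑ r ∈ Finset.range k, g r
        = ∑ r ∈ Finset.range k, ∑ p ∈ T, if Q r p then w p else 0 := by
          simp [hg, Finset.sum_filter]
      _ = ∑ p ∈ T, ∑ r ∈ Finset.range k, if Q r p then w p else 0 := Finset.sum_comm
      _ ≤ ∑ p ∈ T, w p := by
          refine Finset.sum_le_sum (fun p hp => ?_)
          rw [← Finset.sum_filter, Finset.sum_const]
          have hcard : ((Finset.range k).filter (fun r => Q r p)).card ≤ 1 := by
            refine Finset.card_le_one.mpr (fun a ha b hb => ?_)
            simp only [Finset.mem_filter, Finset.mem_range] at ha hb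
            exact huniq p hp a ha.1 b hb.1 ha.2 hb.2
          calc ((Finset.range k).filter (fun r => Q r p)).card • w p
              = (((Finset.range k).filter (fun r => Q r p)).card : ℝ) * w p :=
                nsmul_eq_mul _ _
            _ ≤ 1 * w p := by
                refine mul_le_mul_of_nonneg_right ?_ (hw p hp)
                exact_mod_cast hcard
            _ = w p := one_mul _
  obtain ⟨r₀, hr₀mem, hr₀min⟩ :=
    Finset.exists_min_image (Finset.range k) g ⟨0, Finset.mem_range.mpr hk⟩
  refine ⟨r₀, Finset.mem_range.mp hr₀mem, ?_⟩
  have h1 : (k : ℝ) * g r₀ = ∑ _r ∈ Finset.range k, g r₀ := by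
    rw [Finset.sum_const, Finset.card_range, nsmul_eq_mul]
  have h2 : ∑ _r ∈ Finset.range k, g r₀ ≤ ∑ r ∈ Finset.range k, g r :=
    Finset.sum_le_sum (fun r hr => hr₀min r hr)
  calc (k : ℝ) * g r₀ ≤ ∑ r ∈ Finset.range k, g r := by rw [h1]; exact h2
    _ ≤ ∑ p ∈ T, w p := hsum

set_option maxHeartbeats 1000000 in
/-- With `k = ⌈(1 + ε + √(1+ε))/ε⌉`, for some residues `r, s ∈ {0,…,k−1}`,
`(1 + ε)` times the maximum total weight of a conflict-free subset of the
surviving points of `P` is at least the maximum total weight of a conflict-free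
subset of `P`: the shifting strategy is a `(1+ε)`-approximation. -/
theorem shifting_strategy_ptas (ε : ℝ) (hε : 0 < ε)
    (P : Finset (EuclideanSpace ℝ (Fin 2)))
    (w : EuclideanSpace ℝ (Fin 2) → ℝ) (hw : ∀ p ∈ P, 0 ≤ w p) :
    ∃ r < ⌈(1 + ε + Real.sqrt (1 + ε)) / ε⌉₊,
      ∃ s < ⌈(1 + ε + Real.sqrt (1 + ε)) / ε⌉₊,
        ∃ S ⊆ P,
          (∀ p ∈ S, Survives ⌈(1 + ε + Real.sqrt (1 + ε)) / ε⌉₊ r s p) ∧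
          ConflictFree S ∧
          ∀ T ⊆ P, ConflictFree T →
            ∑ p ∈ T, w p ≤ (1 + ε) * ∑ p ∈ S, w p := by
  set k := ⌈(1 + ε + Real.sqrt (1 + ε)) / ε⌉₊ with hkdef
  set t := Real.sqrt (1 + ε) with htdef
  have ht0 : 0 ≤ t := Real.sqrt_nonneg _
  have ht2 : t ^ 2 = 1 + ε := Real.sq_sqrt (by linarith)
  have ht1 : 1 < t := by nlinarith
  have hkk : (1 + ε + t) / ε ≤ (k : ℝ) := Nat.le_ceil _
  have hεk : 1 + ε + t ≤ ε * (k : ℝ) := by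
    rw [div_le_iff₀ hε] at hkk; linarith
  set kr : ℝ := (k : ℝ) with hkrdef
  have hmain : kr ≤ t * (kr - 1) := by nlinarith
  have hkr1 : 1 < kr := by
    by_contra h
    push_neg at h
    have h2 : t * (kr - 1) ≤ 0 :=
      mul_nonpos_of_nonneg_of_nonpos (by linarith) (by linarith)
    nlinarith
  have hk0 : 0 < k := by
    have : (0 : ℝ) < (k : ℝ) := by rw [← hkrdef]; linarith
    exact_mod_cast this
  -- optimal conflict-free subset T0
  obtain ⟨T0, hT0mem, hT0max⟩ :=
    Finset.exists_max_image (P.powerset.filter ConflictFree) (fun T => ∑ p ∈ T, w p)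
      ⟨∅, by simp [ConflictFree]⟩
  rw [Finset.mem_filter, Finset.mem_powerset] at hT0mem
  obtain ⟨hT0P, hT0cf⟩ := hT0mem
  have hwT0 : ∀ p ∈ T0, 0 ≤ w p := fun p hp => hw p (hT0P hp)
  -- vertical shifting
  set KX : ℕ → EuclideanSpace ℝ (Fin 2) → Prop :=
    fun r p => ∃ c : ℤ, c % (k : ℤ) = (r : ℤ) ∧ |p 0 - (c : ℝ)| < 1 / 2 with hKX
  set KY : ℕ → EuclideanSpace ℝ (Fin 2) → Prop :=
    fun s p => ∃ c : ℤ, c % (k : ℤ) = (s : ℤ) ∧ |p 1 - (c : ℝ)| < 1 / 2 with hKY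
  have huniqX : ∀ p ∈ T0, ∀ r₁ < k, ∀ r₂ < k, KX r₁ p → KX r₂ p → r₁ = r₂ := by
    rintro p _ r₁ _ r₂ _ ⟨c₁, hc₁, hd₁⟩ ⟨c₂, hc₂, hd₂⟩
    have hcc : c₁ = c₂ := unique_center hd₁ hd₂
    have : (r₁ : ℤ) = (r₂ : ℤ) := by rw [← hc₁, ← hc₂, hcc]
    exact_mod_cast this
  obtain ⟨r, hr, hsum1⟩ := avg_step k hk0 T0 w hwT0 KX huniqX
  set T1 := T0.filter (fun p => ¬ KX r p) with hT1def
  have hsplit1 : ∑ p ∈ T0.filter (fun p => KX r p), w p + ∑ p ∈ T1, w p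
      = ∑ p ∈ T0, w p := Finset.sum_filter_add_sum_filter_not T0 _ w
  have hT1sub : T1 ⊆ T0 := Finset.filter_subset _ _
  have hwT1 : ∀ p ∈ T1, 0 ≤ w p := fun p hp => hwT0 p (hT1sub hp)
  -- horizontal shifting
  have huniqY : ∀ p ∈ T1, ∀ s₁ < k, ∀ s₂ < k, KY s₁ p → KY s₂ p → s₁ = s₂ := by
    rintro p _ s₁ _ s₂ _ ⟨c₁, hc₁, hd₁⟩ ⟨c₂, hc₂, hd₂⟩
    have hcc : c₁ = c₂ := unique_center hd₁ hd₂
    have : (s₁ : ℤ) = (s₂ : ℤ) := by rw [← hc₁, ← hc₂, hcc]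
    exact_mod_cast this
  obtain ⟨s, hs, hsum2⟩ := avg_step k hk0 T1 w hwT1 KY huniqY
  set T2 := T1.filter (fun p => ¬ KY s p) with hT2def
  have hsplit2 : ∑ p ∈ T1.filter (fun p => KY s p), w p + ∑ p ∈ T2, w p
      = ∑ p ∈ T1, w p := Finset.sum_filter_add_sum_filter_not T1 _ w
  have hT2sub : T1.filter (fun p => ¬ KY s p) ⊆ T1 := Finset.filter_subset _ _
  refine ⟨r, hr, s, hs, T2, fun p hp => hT0P (hT1sub (hT2sub hp)), ?_, ?_, ?_⟩
  · -- survival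
    intro p hp
    rw [hT2def, Finset.mem_filter] at hp
    obtain ⟨hp1, hpY⟩ := hp
    rw [hT1def, Finset.mem_filter] at hp1
    obtain ⟨_, hpX⟩ := hp1
    constructor
    · intro c hc
      by_contra hcon
      push_neg at hcon
      exact hpX ⟨c, hc, hcon⟩
    · intro c hc
      by_contra hcon
      push_neg at hcon
      exact hpY ⟨c, hc, hcon⟩
  · -- conflict-free
    intro p hp q hq hpq
    exact hT0cf p (hT1sub (hT2sub hp)) q (hT1sub (hT2sub hq)) hpq
  · -- approximation
    intro T hTP hTcf
    have hTA : ∑ p ∈ T, w p ≤ ∑ p ∈ T0, w p :=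
      hT0max T (Finset.mem_filter.mpr ⟨Finset.mem_powerset.mpr hTP, hTcf⟩)
    set A := ∑ p ∈ T0, w p with hA
    set B := ∑ p ∈ T1, w p with hB
    set C := ∑ p ∈ T2, w p with hC
    have hA0 : 0 ≤ A := Finset.sum_nonneg hwT0
    have hB0 : 0 ≤ B := Finset.sum_nonneg hwT1
    have hC0 : 0 ≤ C := Finset.sum_nonneg (fun p hp => hwT1 p (hT2sub hp))
    have e1 : kr * (A - B) ≤ A := by
      have : ∑ p ∈ T0.filter (fun p => KX r p), w p = A - B := by linarith
      rw [this] at hsum1; exact hsum1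
    have e2 : kr * (B - C) ≤ B := by
      have : ∑ p ∈ T1.filter (fun p => KY s p), w p = B - C := by linarith
      rw [this] at hsum2; exact hsum2
    have f1 : (kr - 1) * A ≤ kr * B := by nlinarith
    have f2 : (kr - 1) * B ≤ kr * C := by nlinarith
    have f3 : (kr - 1) * ((kr - 1) * A) ≤ (kr - 1) * (kr * B) :=
      mul_le_mul_of_nonneg_left f1 (by linarith)
    have f4 : kr * ((kr - 1) * B) ≤ kr * (kr * C) :=
      mul_le_mul_of_nonneg_left f2 (by linarith)
    have f5 : (kr - 1) * (kr - 1) * A ≤ kr * kr * C := by nlinarith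
    have f6 : kr * kr ≤ (t * (kr - 1)) * (t * (kr - 1)) :=
      mul_self_le_mul_self (by linarith) hmain
    have f6' : kr * kr ≤ (1 + ε) * ((kr - 1) * (kr - 1)) := by
      calc kr * kr ≤ (t * (kr - 1)) * (t * (kr - 1)) := f6
        _ = t ^ 2 * ((kr - 1) * (kr - 1)) := by ring
        _ = (1 + ε) * ((kr - 1) * (kr - 1)) := by rw [ht2]
    have f7 : kr * kr * A ≤ (1 + ε) * ((kr - 1) * (kr - 1) * A) := by
      nlinarith [mul_le_mul_of_nonneg_right f6' hA0]
    have f8 : (1 + ε) * ((kr - 1) * (kr - 1) * A) ≤ (1 + ε) * (kr * kr * C) :=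
      mul_le_mul_of_nonneg_left f5 (by linarith)
    have hkr2 : (0:ℝ) < kr * kr := by positivity
    have f10 : kr * kr * A ≤ kr * kr * ((1 + ε) * C) := by nlinarith
    have f9 : A ≤ (1 + ε) * C := le_of_mul_le_mul_left f10 hkr2
    linarith
end
end

section
/- Consider a knapsack instance whose items are listed in nonincreasing density order and which has a break item k (so ∑_{i<k} s_i ≤ m < ∑_{i≤k} s_i). Then for every feasible subset S of items, ∑_{i∈S} v_i ≤ 2·max(∑_{i<k} v_i, v_k). In particular, the greedy allocation that selects items {1,…,k−1} if ∑_{i<k} v_i ≥ v_k and selects {k} otherwise achieves value at least half of the optimal knapsack value. -/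
/-- For a knapsack instance listed in nonincreasing density order with break
item `k`, every feasible subset has value at most
`2·max(∑_{i<k} v_i, v_k)`; in particular the greedy allocation, which takes
`{1,…,k−1}` if `∑_{i<k} v_i ≥ v_k` and `{k}` otherwise, is a 2-approximation. -/
theorem knapsack_greedy_half {n : ℕ} (v : Fin n → ℝ) (s : Fin n → ℕ) (m : ℕ)
    (hv : ∀ i, 0 ≤ v i) (hs : ∀ i, 1 ≤ s i)
    (hdens : ∀ i j : Fin n, i ≤ j → v j * (s i : ℝ) ≤ v i * (s j : ℝ))
    (k : Fin n)
    (hk1 : ∑ i ∈ Finset.Iio k, s i ≤ m)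
    (hk2 : m < ∑ i ∈ Finset.Iic k, s i) :
    (∀ S : Finset (Fin n), ∑ i ∈ S, s i ≤ m →
      ∑ i ∈ S, v i ≤ 2 * max (∑ i ∈ Finset.Iio k, v i) (v k)) ∧
    (∀ S : Finset (Fin n), ∑ i ∈ S, s i ≤ m →
      ∑ i ∈ S, v i ≤
        2 * (if v k ≤ ∑ i ∈ Finset.Iio k, v i
              then ∑ i ∈ Finset.Iio k, v i else v k)) := by
  have hsk : (0:ℝ) < (s k : ℝ) := by exact_mod_cast (hs k)
  have key : ∀ S : Finset (Fin n), ∑ i ∈ S, s i ≤ m →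
      ∑ i ∈ S, v i ≤ ∑ i ∈ Finset.Iic k, v i := by
    intro S hS
    set T := S ∩ Finset.Iic k with hT
    set A := Finset.Iic k \ S with hA
    set B := S \ Finset.Iic k with hB
    have hSv : ∑ i ∈ S, v i = ∑ i ∈ T, v i + ∑ i ∈ B, v i :=
      (Finset.sum_inter_add_sum_sdiff S (Finset.Iic k) v).symm
    have hIv : ∑ i ∈ Finset.Iic k, v i = ∑ i ∈ T, v i + ∑ i ∈ A, v i := by
      rw [hT, Finset.inter_comm]
      exact (Finset.sum_inter_add_sum_sdiff (Finset.Iic k) S v).symm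
    have hSs : ∑ i ∈ T, s i + ∑ i ∈ B, s i = ∑ i ∈ S, s i :=
      Finset.sum_inter_add_sum_sdiff S (Finset.Iic k) s
    have hIs : ∑ i ∈ T, s i + ∑ i ∈ A, s i = ∑ i ∈ Finset.Iic k, s i := by
      rw [hT, Finset.inter_comm]
      exact Finset.sum_inter_add_sum_sdiff (Finset.Iic k) S s
    have hsizes : ∑ i ∈ B, s i ≤ ∑ i ∈ A, s i := by omega
    have hsizesR : (∑ i ∈ B, (s i : ℝ)) ≤ ∑ i ∈ A, (s i : ℝ) := by
      push_cast
      exact_mod_cast hsizes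
    have hBv : ∑ i ∈ B, v i ≤ (v k / (s k : ℝ)) * ∑ i ∈ B, (s i : ℝ) := by
      rw [Finset.mul_sum]
      apply Finset.sum_le_sum
      intro j hj
      have hkj : k ≤ j := by
        have : j ∉ Finset.Iic k := (Finset.mem_sdiff.mp hj).2
        simpa using le_of_not_ge (by simpa using this)
      have := hdens k j hkj
      rw [div_mul_eq_mul_div, le_div_iff₀ hsk]
      linarith [this]
    have hAv : (v k / (s k : ℝ)) * ∑ i ∈ A, (s i : ℝ) ≤ ∑ i ∈ A, v i := by
      rw [Finset.mul_sum]
      apply Finset.sum_le_sum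
      intro i hi
      have hik : i ≤ k := by simpa using (Finset.mem_sdiff.mp hi).1
      have := hdens i k hik
      rw [div_mul_eq_mul_div, div_le_iff₀ hsk]
      linarith [this]
    have hvk : 0 ≤ v k / (s k : ℝ) := div_nonneg (hv k) hsk.le
    have : ∑ i ∈ B, v i ≤ ∑ i ∈ A, v i := by
      calc ∑ i ∈ B, v i ≤ (v k / (s k : ℝ)) * ∑ i ∈ B, (s i : ℝ) := hBv
        _ ≤ (v k / (s k : ℝ)) * ∑ i ∈ A, (s i : ℝ) := by
            exact mul_le_mul_of_nonneg_left hsizesR hvk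
        _ ≤ ∑ i ∈ A, v i := hAv
    linarith
  have hIic : ∑ i ∈ Finset.Iic k, v i = ∑ i ∈ Finset.Iio k, v i + v k := by
    rw [← Finset.Iio_insert, Finset.sum_insert (by simp)]
    ring
  have main : ∀ S : Finset (Fin n), ∑ i ∈ S, s i ≤ m →
      ∑ i ∈ S, v i ≤ 2 * max (∑ i ∈ Finset.Iio k, v i) (v k) := by
    intro S hS
    have h1 := key S hS
    have h2 : (∑ i ∈ Finset.Iio k, v i) ≤ max (∑ i ∈ Finset.Iio k, v i) (v k) :=
      le_max_left _ _
    have h3 : v k ≤ max (∑ i ∈ Finset.Iio k, v i) (v k) := le_max_right _ _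
    rw [hIic] at h1
    linarith
  refine ⟨main, fun S hS => ?_⟩
  have := main S hS
  split_ifs with h
  · rwa [max_eq_left h] at this
  · rwa [max_eq_right (le_of_not_ge h)] at this
end

section
/- Consider a knapsack instance whose items are listed in nonincreasing density order and which has a break item k (so ∑_{i<k} s_i ≤ m < ∑_{i≤k} s_i). Then every feasible subset S of items satisfies ∑_{i∈S} v_i ≤ ∑_{i<k} v_i + v_k; that is, the optimal knapsack value is at most the total value of the items preceding the break item plus the value of the break item. -/
/-- For a knapsack instance listed in nonincreasing density order with break
item `k`, every feasible subset has value at most the total value of the items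
preceding the break item plus the value of the break item. -/
theorem knapsack_break_item_bound {n : ℕ} (v : Fin n → ℝ) (s : Fin n → ℕ)
    (m : ℕ) (hv : ∀ i, 0 ≤ v i) (hs : ∀ i, 1 ≤ s i)
    (hdens : ∀ i j : Fin n, i ≤ j → v j * (s i : ℝ) ≤ v i * (s j : ℝ))
    (k : Fin n)
    (hk1 : ∑ i ∈ Finset.Iio k, s i ≤ m)
    (hk2 : m < ∑ i ∈ Finset.Iic k, s i) :
    ∀ S : Finset (Fin n), ∑ i ∈ S, s i ≤ m →
      ∑ i ∈ S, v i ≤ (∑ i ∈ Finset.Iio k, v i) + v k := by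
  intro S hS
  set T := Finset.Iic k with hT
  have hsk : (0:ℝ) < (s k : ℝ) := by
    exact_mod_cast Nat.lt_of_lt_of_le Nat.zero_lt_one (hs k)
  set c : ℝ := v k / (s k : ℝ) with hc
  have hc0 : 0 ≤ c := div_nonneg (hv k) hsk.le
  -- target equals sum over T
  have hTsum : (∑ i ∈ Finset.Iio k, v i) + v k = ∑ i ∈ T, v i := by
    rw [hT, ← Finset.Iio_insert, Finset.sum_insert (by simp)]
    ring
  rw [hTsum]
  -- size comparison
  have hsize : (∑ i ∈ S \ T, (s i : ℝ)) ≤ ∑ i ∈ T \ S, (s i : ℝ) := by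
    have h1 : ∑ i ∈ S ∩ T, s i + ∑ i ∈ S \ T, s i = ∑ i ∈ S, s i :=
      Finset.sum_inter_add_sum_sdiff S T s
    have h2 : ∑ i ∈ T ∩ S, s i + ∑ i ∈ T \ S, s i = ∑ i ∈ T, s i :=
      Finset.sum_inter_add_sum_sdiff T S s
    have hIT : S ∩ T = T ∩ S := Finset.inter_comm S T
    rw [hIT] at h1
    have hnat : ∑ i ∈ S \ T, s i ≤ ∑ i ∈ T \ S, s i := by
      have : ∑ i ∈ S, s i ≤ ∑ i ∈ T, s i := hS.trans hk2.le
      omega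
    exact_mod_cast hnat
  have key1 : ∀ i ∈ S \ T, v i ≤ c * (s i : ℝ) := by
    intro i hi
    have hki : k ≤ i := by
      have := (Finset.mem_sdiff.mp hi).2
      simp only [hT, Finset.mem_Iic, not_le] at this
      exact this.le
    have := hdens k i hki
    rw [hc, div_mul_eq_mul_div, le_div_iff₀ hsk]
    linarith
  have key2 : ∀ i ∈ T \ S, c * (s i : ℝ) ≤ v i := by
    intro i hi
    have hik : i ≤ k := by
      have := (Finset.mem_sdiff.mp hi).1
      simpa [hT, Finset.mem_Iic] using this
    have := hdens i k hik
    rw [hc, div_mul_eq_mul_div, div_le_iff₀ hsk]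
    linarith
  calc ∑ i ∈ S, v i
      = ∑ i ∈ S ∩ T, v i + ∑ i ∈ S \ T, v i :=
        (Finset.sum_inter_add_sum_sdiff S T v).symm
    _ ≤ ∑ i ∈ S ∩ T, v i + ∑ i ∈ S \ T, c * (s i : ℝ) := by
        gcongr with i hi
        exact key1 i hi
    _ = ∑ i ∈ S ∩ T, v i + c * ∑ i ∈ S \ T, (s i : ℝ) := by
        rw [Finset.mul_sum]
    _ ≤ ∑ i ∈ S ∩ T, v i + c * ∑ i ∈ T \ S, (s i : ℝ) := by
        gcongr
    _ = ∑ i ∈ S ∩ T, v i + ∑ i ∈ T \ S, c * (s i : ℝ) := by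
        rw [Finset.mul_sum]
    _ ≤ ∑ i ∈ S ∩ T, v i + ∑ i ∈ T \ S, v i := by
        gcongr with i hi
        exact key2 i hi
    _ = ∑ i ∈ T ∩ S, v i + ∑ i ∈ T \ S, v i := by
        rw [Finset.inter_comm]
    _ = ∑ i ∈ T, v i := Finset.sum_inter_add_sum_sdiff T S v
end

section
/- Let Win ⊆ ℝ be a nonempty, bounded-below, upward-closed set of bids (if b ∈ Win and b ≤ b′ then b′ ∈ Win), and let c = inf Win be the critical value. Define the utility of a bidder with true valuation v ∈ ℝ who bids b ∈ ℝ by u(v,b) = v − c if b ∈ Win, and u(v,b) = 0 otherwise. Then bidding truthfully is a dominant strategy: for all v, b ∈ ℝ, u(v,v) ≥ u(v,b). In other words, a bid-monotone allocation rule that charges each winner its critical value and losers nothing is strategyproof. -/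
open scoped Classical

/-- A bid-monotone allocation rule charging each winner its critical value
`c = inf Win` (and losers nothing) is strategyproof: for every true valuation
`v` and every bid `b`, the utility of bidding truthfully is at least the
utility of bidding `b`. -/
theorem critical_value_strategyproof (Win : Set ℝ) (hne : Win.Nonempty)
    (hbdd : BddBelow Win) (hup : ∀ b b' : ℝ, b ∈ Win → b ≤ b' → b' ∈ Win) :
    ∀ v b : ℝ,
      (if b ∈ Win then v - sInf Win else 0) ≤
        (if v ∈ Win then v - sInf Win else 0) := by
  intro v b
  by_cases hv : v ∈ Win
  · simp only [hv, if_true]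
    have hc : sInf Win ≤ v := csInf_le hbdd hv
    by_cases hb : b ∈ Win <;> simp [hb] <;> linarith
  · simp only [hv, if_false]
    have hvc : v ≤ sInf Win := by
      apply le_csInf hne
      intro w hw
      by_contra h
      exact hv (hup w v hw (le_of_not_ge h))
    by_cases hb : b ∈ Win <;> simp [hb] <;> linarith
end

section
/- Consider n items with integer sizes s_1,…,s_n ≥ 1, capacity m ∈ ℕ, and a value vector v with all values positive and all densities v_i/s_i pairwise distinct. Define the greedy winner set Greedy(v) as follows: if ∑_i s_i ≤ m, all items win; otherwise, list the items in strictly decreasing density order σ(1), σ(2), …, let k be the least index with ∑_{t=1}^{k} s_{σ(t)} > m, and set Greedy(v) = {σ(1),…,σ(k−1)} if ∑_{t=1}^{k−1} v_{σ(t)} ≥ v_{σ(k)}, and Greedy(v) = {σ(k)} otherwise. Then the greedy rule is bid-monotone: if item i ∈ Greedy(v), and v′ is a value vector with v′_i > v_i, v′_j = v_j for all j ≠ i, and with all densities under v′ pairwise distinct, then i ∈ Greedy(v′). -/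
/-- `W` is the greedy winner set for values `v`, sizes `s` and capacity `m`:
if everything fits, all items win; otherwise, listing the items in strictly
decreasing density order `σ`, with `k` the least index at which the cumulative
size exceeds `m`, the winners are the items before `k` if their total value is
at least `v (σ k)`, and the single item `σ k` otherwise. -/
def IsGreedy {n : ℕ} (s : Fin n → ℕ) (m : ℕ) (v : Fin n → ℝ)
    (W : Finset (Fin n)) : Prop :=
  ((∑ j, s j) ≤ m ∧ W = Finset.univ) ∨
  (m < ∑ j, s j ∧ ∃ σ : Equiv.Perm (Fin n),
    (∀ t t' : Fin n, t < t' →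
      v (σ t') * (s (σ t) : ℝ) < v (σ t) * (s (σ t') : ℝ)) ∧
    ∃ k : Fin n,
      (∑ t ∈ Finset.Iio k, s (σ t)) ≤ m ∧ m < ∑ t ∈ Finset.Iic k, s (σ t) ∧
      ((v (σ k) ≤ ∑ t ∈ Finset.Iio k, v (σ t) ∧
          W = (Finset.Iio k).image σ) ∨
       ((∑ t ∈ Finset.Iio k, v (σ t)) < v (σ k) ∧ W = {σ k})))

namespace GreedyBM

variable {n : ℕ}

/-- Density of item `j`. -/
noncomputable def dens (s : Fin n → ℕ) (v : Fin n → ℝ) (j : Fin n) : ℝ :=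
  v j / (s j : ℝ)

open Classical in
/-- The set of items strictly denser than `j`. -/
noncomputable def B (s : Fin n → ℕ) (v : Fin n → ℝ) (j : Fin n) : Finset (Fin n) :=
  Finset.univ.filter fun j' => dens s v j < dens s v j'

lemma mem_B {s : Fin n → ℕ} {v : Fin n → ℝ} {j j' : Fin n} :
    j' ∈ B s v j ↔ dens s v j < dens s v j' := by
  simp [B]

lemma dens_lt_iff {s : Fin n → ℕ} (hs : ∀ i, 1 ≤ s i) {v : Fin n → ℝ} {j j' : Fin n} :
    dens s v j < dens s v j' ↔ v j * (s j' : ℝ) < v j' * (s j : ℝ) := by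
  have h1 : (0:ℝ) < (s j : ℝ) := by exact_mod_cast hs j
  have h2 : (0:ℝ) < (s j' : ℝ) := by exact_mod_cast hs j'
  rw [dens, dens, div_lt_div_iff₀ h1 h2]

lemma dens_ne {s : Fin n → ℕ} (hs : ∀ i, 1 ≤ s i) {v : Fin n → ℝ}
    (hd : ∀ i j : Fin n, i ≠ j → v i * (s j : ℝ) ≠ v j * (s i : ℝ))
    {j j' : Fin n} (h : j ≠ j') : dens s v j ≠ dens s v j' := by
  have h1 : (0:ℝ) < (s j : ℝ) := by exact_mod_cast hs j
  have h2 : (0:ℝ) < (s j' : ℝ) := by exact_mod_cast hs j'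
  intro he
  rw [dens, dens, div_eq_div_iff h1.ne' h2.ne'] at he
  exact hd j j' h he

/-- Translation of `IsGreedy` (in the overdemanded case) into set language. -/
lemma greedy_spec {s : Fin n → ℕ} (hs : ∀ i, 1 ≤ s i) {m : ℕ} {v : Fin n → ℝ}
    {W : Finset (Fin n)} (h : IsGreedy s m v W) (hm : m < ∑ j, s j) :
    ∃ c : Fin n, (∑ j ∈ B s v c, s j) ≤ m ∧ m < (∑ j ∈ B s v c, s j) + s c ∧
      ((v c ≤ ∑ j ∈ B s v c, v j ∧ W = B s v c) ∨
       ((∑ j ∈ B s v c, v j) < v c ∧ W = {c})) := by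
  rcases h with ⟨h1, _⟩ | ⟨_, σ, hσ, k, hk1, hk2, hk3⟩
  · omega
  refine ⟨σ k, ?_⟩
  have himg : (Finset.Iio k).image σ = B s v (σ k) := by
    ext x
    constructor
    · intro hx
      rcases Finset.mem_image.mp hx with ⟨t, ht, rfl⟩
      rw [Finset.mem_Iio] at ht
      exact mem_B.mpr ((dens_lt_iff hs).mpr (hσ t k ht))
    · intro hx
      have hx' := (dens_lt_iff hs).mp (mem_B.mp hx)
      obtain ⟨t, rfl⟩ : ∃ t, σ t = x := ⟨σ.symm x, σ.apply_symm_apply x⟩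
      have ht : t < k := by
        rcases lt_trichotomy t k with h' | h' | h'
        · exact h'
        · subst h'; exact absurd hx' (lt_irrefl _)
        · exact absurd (hσ k t h') (by linarith)
      exact Finset.mem_image.mpr ⟨t, Finset.mem_Iio.mpr ht, rfl⟩
  have hinj : ∀ a ∈ Finset.Iio k, ∀ b ∈ Finset.Iio k, σ a = σ b → a = b :=
    fun a _ b _ hab => σ.injective hab
  have hsum_s : (∑ j ∈ B s v (σ k), s j) = ∑ t ∈ Finset.Iio k, s (σ t) := by
    rw [← himg, Finset.sum_image hinj]
  have hsum_v : (∑ j ∈ B s v (σ k), v j) = ∑ t ∈ Finset.Iio k, v (σ t) := by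
    rw [← himg, Finset.sum_image hinj]
  have hIic : (∑ t ∈ Finset.Iic k, s (σ t))
      = s (σ k) + ∑ t ∈ Finset.Iio k, s (σ t) := by
    rw [← Finset.Iio_insert, Finset.sum_insert (by simp)]
  refine ⟨by omega, by omega, ?_⟩
  rcases hk3 with ⟨h1, h2⟩ | ⟨h1, h2⟩
  · exact Or.inl ⟨by rw [hsum_v]; exact h1, by rw [h2, himg]⟩
  · exact Or.inr ⟨by rw [hsum_v]; exact h1, h2⟩

/-- Uniqueness of the critical item. -/
lemma crit_unique {s : Fin n → ℕ} (hs : ∀ i, 1 ≤ s i) {v : Fin n → ℝ}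
    (hd : ∀ i j : Fin n, i ≠ j → v i * (s j : ℝ) ≠ v j * (s i : ℝ)) {m : ℕ}
    {c1 c2 : Fin n}
    (h11 : (∑ j ∈ B s v c1, s j) ≤ m) (h12 : m < (∑ j ∈ B s v c1, s j) + s c1)
    (h21 : (∑ j ∈ B s v c2, s j) ≤ m) (h22 : m < (∑ j ∈ B s v c2, s j) + s c2) :
    c1 = c2 := by
  by_contra hne
  have key : ∀ a b : Fin n, dens s v a < dens s v b →
      (∑ j ∈ B s v b, s j) + s b ≤ ∑ j ∈ B s v a, s j := by
    intro a b hab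
    have hsub : insert b (B s v b) ⊆ B s v a := by
      intro x hx
      rcases Finset.mem_insert.mp hx with rfl | hx
      · exact mem_B.mpr hab
      · exact mem_B.mpr (hab.trans (mem_B.mp hx))
    have h := Finset.sum_le_sum_of_subset (f := s) hsub
    rwa [Finset.sum_insert (fun h' => lt_irrefl _ (mem_B.mp h')), add_comm] at h
  rcases (dens_ne hs hd hne).lt_or_gt with h | h
  · have := key c1 c2 h; omega
  · have := key c2 c1 h; omega

end GreedyBM

open GreedyBM in
/-- The greedy knapsack rule is bid-monotone: if item `i` wins under values
`v` and its value is raised (all other values fixed, densities remaining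
pairwise distinct), then `i` still wins. -/
theorem greedy_bid_monotone {n : ℕ} (s : Fin n → ℕ) (hs : ∀ i, 1 ≤ s i)
    (m : ℕ) (v v' : Fin n → ℝ)
    (hv : ∀ i, 0 < v i) (hv' : ∀ i, 0 < v' i)
    (hdist : ∀ i j : Fin n, i ≠ j → v i * (s j : ℝ) ≠ v j * (s i : ℝ))
    (hdist' : ∀ i j : Fin n, i ≠ j → v' i * (s j : ℝ) ≠ v' j * (s i : ℝ))
    (i : Fin n) (hvi : v i < v' i) (hother : ∀ j : Fin n, j ≠ i → v' j = v j) :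
    ∀ W W' : Finset (Fin n), IsGreedy s m v W → IsGreedy s m v' W' →
      i ∈ W → i ∈ W' := by
  intro W W' hW hW' hiW
  by_cases hm : m < ∑ j, s j
  swap
  · rcases hW' with ⟨_, rfl⟩ | ⟨h, _⟩
    · exact Finset.mem_univ i
    · omega
  obtain ⟨c, hc1, hc2, hc3⟩ := greedy_spec hs hW hm
  obtain ⟨c', hc'1, hc'2, hc'3⟩ := greedy_spec hs hW' hm
  have hdeq : ∀ j : Fin n, j ≠ i → dens s v' j = dens s v j := by
    intro j hj; rw [dens, dens, hother j hj]
  have hdii' : dens s v i < dens s v' i := by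
    have h0 : (0:ℝ) < (s i : ℝ) := by exact_mod_cast hs i
    rw [dens, dens]
    exact div_lt_div_of_pos_right hvi h0
  rcases hc3 with ⟨hval, hWeq⟩ | ⟨hval, hWeq⟩
  · -- Case A : W is the prefix B s v c, and i is in it
    subst hWeq
    have hiBc : i ∈ B s v c := hiW
    have hic : i ≠ c := by
      rintro rfl; exact absurd (mem_B.mp hiBc) (lt_irrefl _)
    have hBeq : B s v' c = B s v c := by
      ext x
      by_cases hxi : x = i
      · subst hxi
        simp only [mem_B]
        constructor
        · intro _; exact mem_B.mp hiBc
        · intro _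
          rw [hdeq c (Ne.symm hic)]
          exact (mem_B.mp hiBc).trans hdii'
      · simp only [mem_B, hdeq x hxi, hdeq c (Ne.symm hic)]
    have hcc' : c' = c :=
      crit_unique hs hdist' hc'1 hc'2 (by rw [hBeq]; exact hc1) (by rw [hBeq]; exact hc2)
    subst hcc'
    have hle : v' c' ≤ ∑ j ∈ B s v' c', v' j := by
      rw [hBeq, hother c' (Ne.symm hic)]
      refine hval.trans (Finset.sum_le_sum ?_)
      intro j _
      by_cases hj : j = i
      · subst hj; exact hvi.le
      · rw [hother j hj]
    rcases hc'3 with ⟨_, hW'eq⟩ | ⟨hlt, _⟩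
    · rw [hW'eq, hBeq]; exact hiBc
    · linarith
  · -- Case B : W = {c}, so i = c, the critical item
    subst hWeq
    rw [Finset.mem_singleton] at hiW
    subst hiW
    have hB'sub : B s v' i ⊆ B s v i := by
      intro x hx
      have hxi : x ≠ i := by
        rintro rfl; exact absurd (mem_B.mp hx) (lt_irrefl _)
      rw [mem_B]
      calc dens s v i < dens s v' i := hdii'
        _ < dens s v' x := mem_B.mp hx
        _ = dens s v x := hdeq x hxi
    by_cases hB1 : m < (∑ j ∈ B s v' i, s j) + s i
    · -- i is still critical
      have hc'i : c' = i :=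
        crit_unique hs hdist' hc'1 hc'2
          ((Finset.sum_le_sum_of_subset hB'sub).trans hc1) hB1
      subst hc'i
      have hlt : (∑ j ∈ B s v' c', v' j) < v' c' := by
        have h1 : (∑ j ∈ B s v' c', v' j) = ∑ j ∈ B s v' c', v j := by
          refine Finset.sum_congr rfl ?_
          intro j hj
          refine hother j ?_
          rintro rfl; exact absurd (mem_B.mp hj) (lt_irrefl _)
        have h2 : (∑ j ∈ B s v' c', v j) ≤ ∑ j ∈ B s v c', v j :=
          Finset.sum_le_sum_of_subset_of_nonneg hB'sub (fun j _ _ => (hv j).le)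
        calc (∑ j ∈ B s v' c', v' j) ≤ ∑ j ∈ B s v c', v j := by rw [h1]; exact h2
          _ < v c' := hval
          _ < v' c' := hvi
      rcases hc'3 with ⟨h1, _⟩ | ⟨_, hW'eq⟩
      · linarith
      · rw [hW'eq]; exact Finset.mem_singleton_self _
    · push_neg at hB1
      -- i fits before the new critical item c'
      have hic' : i ∈ B s v' c' := by
        by_contra hni
        have hc'i : c' ≠ i := by rintro rfl; omega
        have hlt : dens s v' i < dens s v' c' := by
          rcases (dens_ne hs hdist' hc'i).lt_or_gt with h | h
          · exact absurd (mem_B.mpr h) hni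
          · exact h
        have hsub : insert c' (B s v' c') ⊆ B s v' i := by
          intro x hx
          rcases Finset.mem_insert.mp hx with rfl | hx
          · exact mem_B.mpr hlt
          · exact mem_B.mpr (hlt.trans (mem_B.mp hx))
        have hss := Finset.sum_le_sum_of_subset (f := s) hsub
        rw [Finset.sum_insert (fun h' => lt_irrefl _ (mem_B.mp h'))] at hss
        omega
      have hc'i : c' ≠ i := by
        rintro rfl; exact absurd (mem_B.mp hic') (lt_irrefl _)
      rcases (dens_ne hs hdist hc'i).lt_or_gt with hcase | hcase
      · -- impossible: i was originally denser than c'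
        exfalso
        have hDne : ((B s v i) \ (B s v' i)).Nonempty := by
          rw [Finset.sdiff_nonempty]
          intro hsub
          have h1 := Finset.sum_le_sum_of_subset (f := s) hsub
          omega
        obtain ⟨j, hjD, hjmin⟩ := Finset.exists_min_image _ (dens s v) hDne
        have hjBi : j ∈ B s v i := (Finset.mem_sdiff.mp hjD).1
        have hjnB' : j ∉ B s v' i := (Finset.mem_sdiff.mp hjD).2
        have hji : j ≠ i := by
          rintro rfl; exact absurd (mem_B.mp hjBi) (lt_irrefl _)
        have hdji' : dens s v' j < dens s v' i := by
          rcases (dens_ne hs hdist' hji).lt_or_gt with h | h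
          · exact h
          · exact absurd (mem_B.mpr h) hjnB'
        have hdc'j : dens s v' c' < dens s v' j := by
          rw [hdeq j hji, hdeq c' hc'i]
          exact hcase.trans (mem_B.mp hjBi)
        have hsub1 : insert j (B s v' j) ⊆ B s v' c' := by
          intro x hx
          rcases Finset.mem_insert.mp hx with rfl | hx
          · exact mem_B.mpr hdc'j
          · exact mem_B.mpr (hdc'j.trans (mem_B.mp hx))
        have hsub2 : insert i (B s v' i) ∪ ((B s v i) \ (B s v' i)).erase j
            ⊆ B s v' j := by
          intro x hx
          rcases Finset.mem_union.mp hx with hx | hx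
          · rcases Finset.mem_insert.mp hx with rfl | hx
            · exact mem_B.mpr hdji'
            · exact mem_B.mpr (hdji'.trans (mem_B.mp hx))
          · have hxj : x ≠ j := (Finset.mem_erase.mp hx).1
            have hxD := (Finset.mem_erase.mp hx).2
            have hxBi : x ∈ B s v i := (Finset.mem_sdiff.mp hxD).1
            have hxi : x ≠ i := by
              rintro rfl; exact absurd (mem_B.mp hxBi) (lt_irrefl _)
            rw [mem_B, hdeq j hji, hdeq x hxi]
            exact lt_of_le_of_ne (hjmin x hxD) (dens_ne hs hdist hxj.symm)
        have hdisj : Disjoint (insert i (B s v' i))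
            (((B s v i) \ (B s v' i)).erase j) := by
          rw [Finset.disjoint_left]
          intro a ha1 ha2
          have haD := (Finset.mem_erase.mp ha2).2
          rcases Finset.mem_insert.mp ha1 with rfl | ha1
          · exact absurd (mem_B.mp (Finset.mem_sdiff.mp haD).1) (lt_irrefl _)
          · exact (Finset.mem_sdiff.mp haD).2 ha1
        have e1 : (∑ x ∈ insert j (B s v' j), s x) ≤ ∑ x ∈ B s v' c', s x :=
          Finset.sum_le_sum_of_subset hsub1
        rw [Finset.sum_insert (fun h' => lt_irrefl _ (mem_B.mp h'))] at e1
        have e2 : (∑ x ∈ insert i (B s v' i) ∪ ((B s v i) \ (B s v' i)).erase j, s x)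
            ≤ ∑ x ∈ B s v' j, s x := Finset.sum_le_sum_of_subset hsub2
        rw [Finset.sum_union hdisj,
          Finset.sum_insert (fun h' => lt_irrefl _ (mem_B.mp h'))] at e2
        have e3 : (∑ x ∈ ((B s v i) \ (B s v' i)).erase j, s x) + s j
            = ∑ x ∈ (B s v i) \ (B s v' i), s x := Finset.sum_erase_add _ _ hjD
        have e4 : (∑ x ∈ (B s v i) \ (B s v' i), s x) + ∑ x ∈ B s v' i, s x
            = ∑ x ∈ B s v i, s x := Finset.sum_sdiff hB'sub
        omega
      · -- c' was originally denser than i, so it was a loser dominated by v i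
        have hkey : v' c' ≤ ∑ j ∈ B s v' c', v' j := by
          have h1 : v c' ≤ ∑ j ∈ B s v i, v j :=
            Finset.single_le_sum (f := v) (fun j _ => (hv j).le) (mem_B.mpr hcase)
          have h2 : v' i ≤ ∑ j ∈ B s v' c', v' j :=
            Finset.single_le_sum (f := v') (fun j _ => (hv' j).le) hic'
          rw [hother c' hc'i]
          linarith
        rcases hc'3 with ⟨_, hW'eq⟩ | ⟨hlt, _⟩
        · rw [hW'eq]; exact hic'
        · linarith
end
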